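/- Every complete intersection numerical semigroup is cyclotomic, i.e., every complex root of its semigroup polynomial lies in the closed unit disc |z| ≤ 1. -/

import Mathlib

open Polynomial
open scoped Classical

/-- A numerical semigroup: a subset of `ℕ` containing `0`, closed under addition,
with finite complement in `ℕ`. -/
structure NumericalSemigroup where
  carrier : Set ℕ
  zero_mem : 0 ∈ carrier
  add_mem : ∀ ⦃a b : ℕ⦄, a ∈ carrier → b ∈ carrier → a + b ∈ carrier
  finite_compl : Set.Finite carrierᶜ

namespace NumericalSemigroup

/-- The Hilbert series `H_S(x) = Σ_{s ∈ S} x^s`. -/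
noncomputable def H (S : NumericalSemigroup) : PowerSeries ℤ :=
  PowerSeries.mk fun n => if n ∈ S.carrier then 1 else 0

/-- The Hilbert series evaluated at `x^w`: `H_S(x^w) = Σ_{s ∈ S} x^{w·s}`. -/
noncomputable def Hexp (S : NumericalSemigroup) (w : ℕ) : PowerSeries ℤ :=
  PowerSeries.mk fun n => if ∃ s ∈ S.carrier, n = w * s then 1 else 0

/-- The semigroup polynomial `P_S(x) = (1-x)·H_S(x) = 1 + (x-1)·Σ_{s ∉ S} x^s`. -/
noncomputable def P (S : NumericalSemigroup) : Polynomial ℤ :=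
  1 + (X - 1) * ∑ s ∈ S.finite_compl.toFinset, X ^ s

/-- The Frobenius number: the largest integer not in `S` (equal to `-1` when `S = ℕ`). -/
noncomputable def Frob (S : NumericalSemigroup) : ℤ :=
  (insert (-1 : ℤ) (S.finite_compl.toFinset.image fun n : ℕ => (n : ℤ))).max'
    (Finset.insert_nonempty _ _)

/-- The genus: the number of gaps of `S`. -/
noncomputable def genus (S : NumericalSemigroup) : ℕ := S.finite_compl.toFinset.card

/-- `S` viewed as a set of integers. -/
def intSet (S : NumericalSemigroup) : Set ℤ := (fun n : ℕ => (n : ℤ)) '' S.carrier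

/-- `S` is cyclotomic if every complex root of `P_S` lies in the closed unit disc. -/
def IsCyclotomicNS (S : NumericalSemigroup) : Prop :=
  ∀ z : ℂ, Polynomial.aeval z S.P = 0 → ‖z‖ ≤ 1

/-- `S` is symmetric if for every integer `z`, `z ∈ S ↔ F(S) - z ∉ S`. -/
def IsSymmetric (S : NumericalSemigroup) : Prop :=
  ∀ z : ℤ, z ∈ S.intSet ↔ S.Frob - z ∉ S.intSet

/-- The Apéry set of `S` with respect to `m`: elements `s ∈ S` with `s - m ∉ S`
(in particular all `s ∈ S` with `s < m`). -/
def Ap (S : NumericalSemigroup) (m : ℕ) : Set ℕ :=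
  {s ∈ S.carrier | ∀ t ∈ S.carrier, t + m ≠ s}

end NumericalSemigroup

/-- Complete intersection numerical semigroups, defined recursively: `ℕ` is a complete
intersection, and a gluing `S = a₁S₁ +_{a₁a₂} a₂S₂` of two complete intersection
numerical semigroups is a complete intersection. -/
inductive IsCompleteIntersection : NumericalSemigroup → Prop
  | nat : ∀ S : NumericalSemigroup, S.carrier = Set.univ → IsCompleteIntersection S
  | gluing : ∀ (S S₁ S₂ : NumericalSemigroup) (a₁ a₂ : ℕ), 0 < a₁ → 0 < a₂ →
      Nat.Coprime a₁ a₂ → a₁ ∈ S₂.carrier → a₂ ∈ S₁.carrier →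
      S.carrier = {n | ∃ s₁ ∈ S₁.carrier, ∃ s₂ ∈ S₂.carrier, n = a₁ * s₁ + a₂ * s₂} →
      IsCompleteIntersection S₁ → IsCompleteIntersection S₂ → IsCompleteIntersection S

/-!
Write `H_S = Σ_{s ∈ S} xˢ`, so that `P_S = (1 - x) H_S`. For `m ∈ S` the Apéry set
`Ap(S, m) = {w ∈ S | w - m ∉ S}` satisfies `H_S(x) (1 - xᵐ) = Σ_{w ∈ Ap(S, m)} xʷ`.
If `S = a₁S₁ + a₂S₂` is a gluing, every element of `S` is uniquely `a₁s₁ + a₂w` with `s₁ ∈ S₁`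
and `w ∈ Ap(S₂, a₁)`: existence because `a₂ ∈ S₁` absorbs multiples of `a₁` from `s₂`,
uniqueness because `a₁` and `a₂` are coprime and distinct Apéry elements are incongruent
modulo `a₁`. Hence `H_S(x) = H_{S₁}(x^{a₁}) H_{S₂}(x^{a₂}) (1 - x^{a₁a₂})`, that is,
`P_S(x) (1 - x^{a₁}) (1 - x^{a₂}) = P_{S₁}(x^{a₁}) P_{S₂}(x^{a₂}) (1 - x^{a₁a₂}) (1 - x)`.
So a root `z` of `P_S` is either a root of unity or has `z^{aᵢ}` a root of `P_{Sᵢ}`, and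
`‖z‖ ≤ 1` follows by induction on the complete intersection structure.
-/

open scoped Pointwise

namespace PowerSeries

open Finset.HasAntidiagonal (mem_antidiagonal)

noncomputable def indicator (A : Set ℕ) : PowerSeries ℤ :=
  mk fun n => if n ∈ A then 1 else 0

theorem coeff_indicator (A : Set ℕ) (n : ℕ) :
    coeff n (indicator A) = if n ∈ A then 1 else 0 :=
  coeff_mk _ _

theorem indicator_univ : indicator Set.univ = mk 1 := by
  ext n
  simp [coeff_indicator]

theorem indicator_add_indicator_compl (A : Set ℕ) :
    indicator A + indicator Aᶜ = indicator Set.univ := by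
  ext n
  by_cases hn : n ∈ A <;> simp [coeff_indicator, hn]

theorem indicator_mul_indicator {A B : Set ℕ}
    (h : Set.InjOn (fun p : ℕ × ℕ => p.1 + p.2) (A ×ˢ B)) :
    indicator A * indicator B = indicator (A + B) := by
  ext n
  simp only [coeff_mul, coeff_indicator, ite_zero_mul_ite_zero, mul_one]
  by_cases hn : n ∈ A + B
  · obtain ⟨a, ha, b, hb, rfl⟩ := hn
    rw [if_pos ⟨a, ha, b, hb, rfl⟩, Finset.sum_eq_single (a, b)]
    · simp [ha, hb]
    · rintro p hp hpab
      rw [if_neg]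
      exact fun hpAB => hpab (h hpAB (Set.mk_mem_prod ha hb) (mem_antidiagonal.mp hp))
    · simp
  · rw [if_neg hn]
    refine Finset.sum_eq_zero fun p hp => if_neg fun hpAB => hn ?_
    exact ⟨p.1, hpAB.1, p.2, hpAB.2, mem_antidiagonal.mp hp⟩

theorem expand_indicator {w : ℕ} (hw : w ≠ 0) (A : Set ℕ) :
    expand w hw (indicator A) = indicator ((w * ·) '' A) := by
  ext n
  rw [coeff_expand, coeff_indicator, coeff_indicator]
  by_cases hdvd : w ∣ n
  · obtain ⟨k, rfl⟩ := hdvd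
    simp only [Nat.mul_div_cancel_left k (Nat.pos_of_ne_zero hw), dvd_mul_right, if_true,
      (mul_right_injective₀ hw).mem_set_image]
  · rw [if_neg hdvd, if_neg]
    rintro ⟨k, -, rfl⟩
    exact hdvd (dvd_mul_right w k)

theorem expand_coe {R : Type*} [CommRing R] {p : ℕ} (hp : p ≠ 0) (f : R[X]) :
    expand p hp (f : PowerSeries R) = (Polynomial.expand R p f : R[X]) := by
  ext n
  rw [coeff_expand, Polynomial.coeff_coe, Polynomial.coeff_coe,
    Polynomial.coeff_expand (Nat.pos_of_ne_zero hp)]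

end PowerSeries

namespace NumericalSemigroup

open PowerSeries (indicator coeff_indicator)

theorem isCyclotomicNS_of_carrier_eq_univ {S : NumericalSemigroup} (h : S.carrier = Set.univ) :
    S.IsCyclotomicNS := by
  intro z hz
  simp [P, h] at hz

section

variable (S : NumericalSemigroup)

theorem mul_mem {x : ℕ} (hx : x ∈ S.carrier) (k : ℕ) : k * x ∈ S.carrier := by
  induction k with
  | zero => simpa using S.zero_mem
  | succ k ih => simpa [Nat.succ_mul] using S.add_mem ih hx

theorem H_eq_indicator : S.H = indicator S.carrier := rfl

theorem coe_P : (S.P : PowerSeries ℤ) = (1 - PowerSeries.X) * S.H := by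
  have hgaps : ((∑ s ∈ S.finite_compl.toFinset, X ^ s : ℤ[X]) : PowerSeries ℤ) =
      indicator S.carrierᶜ := by
    ext n
    simp [Polynomial.coeff_coe, Polynomial.coeff_X_pow, coeff_indicator]
  have hsplit : S.H + indicator S.carrierᶜ = PowerSeries.mk 1 := by
    rw [H_eq_indicator, PowerSeries.indicator_add_indicator_compl, PowerSeries.indicator_univ]
  rw [P]
  push_cast
  rw [hgaps]
  linear_combination -(1 - PowerSeries.X) * hsplit - PowerSeries.mk_one_mul_one_sub_eq_one ℤ

theorem H_mul_one_sub_X_pow {m : ℕ} (hm : m ∈ S.carrier) :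
    S.H * (1 - PowerSeries.X ^ m) = indicator (S.Ap m) := by
  ext n
  rw [mul_sub, mul_one, map_sub, PowerSeries.coeff_mul_X_pow', H_eq_indicator,
    coeff_indicator, coeff_indicator, coeff_indicator]
  have hAp : n ∈ S.Ap m ↔ n ∈ S.carrier ∧ ¬ (m ≤ n ∧ n - m ∈ S.carrier) := by
    refine and_congr_right fun _ => ⟨fun h ⟨hmn, hnm⟩ => h _ hnm (by omega), ?_⟩
    rintro h t ht rfl
    exact h ⟨by omega, by simpa using ht⟩
  have hclosed (hmn : m ≤ n) (h : n - m ∈ S.carrier) : n ∈ S.carrier := by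
    simpa [Nat.sub_add_cancel hmn] using S.add_mem h hm
  by_cases hmn : m ≤ n <;> by_cases hnm : n - m ∈ S.carrier <;> by_cases hn : n ∈ S.carrier <;>
    simp_all

theorem exists_mem_Ap_add_mul {m : ℕ} (hm : 0 < m) {s : ℕ} (hs : s ∈ S.carrier) :
    ∃ w ∈ S.Ap m, ∃ k, s = w + k * m := by
  induction s using Nat.strong_induction_on with
  | _ s ih =>
    by_cases hAp : s ∈ S.Ap m
    · exact ⟨s, hAp, 0, by simp⟩
    · obtain ⟨t, ht, rfl⟩ : ∃ t ∈ S.carrier, t + m = s := by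
        simpa [Ap, hs] using hAp
      obtain ⟨w, hw, k, rfl⟩ := ih t (by omega) ht
      exact ⟨w, hw, k + 1, by ring⟩

theorem eq_of_mem_Ap_of_modEq {m : ℕ} (hm : m ∈ S.carrier) {w w' : ℕ} (hw : w ∈ S.Ap m)
    (hw' : w' ∈ S.Ap m) (h : w ≡ w' [MOD m]) : w = w' := by
  wlog hle : w ≤ w' generalizing w w'
  · exact (this hw' hw h.symm (by omega)).symm
  obtain ⟨k, hk⟩ := (Nat.modEq_iff_dvd' hle).mp h
  cases k with
  | zero => omega
  | succ k =>
    refine absurd ?_ (hw'.2 (w + k * m) (S.add_mem hw.1 (S.mul_mem hm k)))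
    rw [mul_add_one] at hk
    linarith [Nat.sub_add_cancel hle, mul_comm m k]

end

structure IsGluing (S S₁ S₂ : NumericalSemigroup) (a₁ a₂ : ℕ) : Prop where
  pos₁ : 0 < a₁
  pos₂ : 0 < a₂
  coprime : Nat.Coprime a₁ a₂
  mem₂ : a₁ ∈ S₂.carrier
  mem₁ : a₂ ∈ S₁.carrier
  carrier_eq : S.carrier = {n | ∃ s₁ ∈ S₁.carrier, ∃ s₂ ∈ S₂.carrier, n = a₁ * s₁ + a₂ * s₂}

namespace IsGluing

variable {S S₁ S₂ : NumericalSemigroup} {a₁ a₂ : ℕ}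

theorem carrier_eq_add (hS : IsGluing S S₁ S₂ a₁ a₂) :
    S.carrier = (a₁ * ·) '' S₁.carrier + (a₂ * ·) '' S₂.Ap a₁ := by
  ext n
  simp only [hS.carrier_eq, Set.mem_ofPred_eq, Set.mem_add, Set.mem_image]
  constructor
  · rintro ⟨s₁, hs₁, s₂, hs₂, rfl⟩
    obtain ⟨w, hw, k, rfl⟩ := S₂.exists_mem_Ap_add_mul hS.pos₁ hs₂
    exact ⟨_, ⟨s₁ + k * a₂, S₁.add_mem hs₁ (S₁.mul_mem hS.mem₁ k), rfl⟩, _, ⟨w, hw, rfl⟩,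
      by ring⟩
  · rintro ⟨_, ⟨s₁, hs₁, rfl⟩, _, ⟨w, hw, rfl⟩, rfl⟩
    exact ⟨s₁, hs₁, w, hw.1, rfl⟩

theorem injOn_add (hS : IsGluing S S₁ S₂ a₁ a₂) :
    Set.InjOn (fun p : ℕ × ℕ => p.1 + p.2)
      (((a₁ * ·) '' S₁.carrier) ×ˢ ((a₂ * ·) '' S₂.Ap a₁)) := by
  rintro ⟨_, _⟩ ⟨⟨s₁, -, rfl⟩, ⟨w, hw, rfl⟩⟩ ⟨_, _⟩ ⟨⟨s₁', -, rfl⟩, ⟨w', hw', rfl⟩⟩ heq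
  simp only at heq
  have hmod : a₂ * w ≡ a₂ * w' [MOD a₁] := by
    simpa [Nat.ModEq, Nat.add_mul_mod_self_left] using congrArg (· % a₁) heq
  have hww' : w = w' :=
    S₂.eq_of_mem_Ap_of_modEq hS.mem₂ hw hw' (hmod.cancel_left_of_coprime hS.coprime)
  subst hww'
  simp only [Prod.mk.injEq, and_true]
  omega

theorem H_eq (hS : IsGluing S S₁ S₂ a₁ a₂) : S.H = PowerSeries.expand a₁ hS.pos₁.ne' S₁.H *
    PowerSeries.expand a₂ hS.pos₂.ne' S₂.H * (1 - PowerSeries.X ^ (a₁ * a₂)) := by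
  have hAp : PowerSeries.expand a₂ hS.pos₂.ne' S₂.H * (1 - PowerSeries.X ^ (a₁ * a₂)) =
      indicator ((a₂ * ·) '' S₂.Ap a₁) := by
    rw [← PowerSeries.expand_indicator, ← S₂.H_mul_one_sub_X_pow hS.mem₂, map_mul, map_sub,
      map_one, map_pow, PowerSeries.expand_X, ← pow_mul, mul_comm a₂]
  rw [mul_assoc, hAp, H_eq_indicator, H_eq_indicator, PowerSeries.expand_indicator,
    PowerSeries.indicator_mul_indicator hS.injOn_add, hS.carrier_eq_add]

theorem P_mul_eq (hS : IsGluing S S₁ S₂ a₁ a₂) :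
    S.P * ((1 - X ^ a₁) * (1 - X ^ a₂)) =
      expand ℤ a₁ S₁.P * expand ℤ a₂ S₂.P * ((1 - X ^ (a₁ * a₂)) * (1 - X)) := by
  apply Polynomial.coe_injective ℤ
  push_cast
  rw [← PowerSeries.expand_coe hS.pos₁.ne', ← PowerSeries.expand_coe hS.pos₂.ne', coe_P, coe_P,
    coe_P, hS.H_eq]
  simp only [map_mul, map_sub, map_one, PowerSeries.expand_X]
  ring

theorem isCyclotomicNS (hS : IsGluing S S₁ S₂ a₁ a₂) (h₁ : S₁.IsCyclotomicNS)
    (h₂ : S₂.IsCyclotomicNS) : S.IsCyclotomicNS := by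
  intro z hz
  have hroot := congrArg (aeval z) hS.P_mul_eq
  simp only [map_mul, map_sub, map_one, map_pow, aeval_X, expand_aeval, hz, zero_mul] at hroot
  rcases mul_eq_zero.mp hroot.symm with hP | hunit
  · rcases mul_eq_zero.mp hP with hP₁ | hP₂
    · simpa [pow_le_one_iff_of_nonneg (norm_nonneg z) hS.pos₁.ne'] using h₁ _ hP₁
    · simpa [pow_le_one_iff_of_nonneg (norm_nonneg z) hS.pos₂.ne'] using h₂ _ hP₂
  · rcases mul_eq_zero.mp hunit with hpow | hone
    · exact (Complex.norm_eq_one_of_pow_eq_one (sub_eq_zero.mp hpow).symm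
        (Nat.mul_pos hS.pos₁ hS.pos₂).ne').le
    · simp [← sub_eq_zero.mp hone]

end IsGluing

end NumericalSemigroup

open NumericalSemigroup in
/-- Every complete intersection numerical semigroup is cyclotomic. -/
theorem completeIntersection_isCyclotomic (S : NumericalSemigroup)
    (h : IsCompleteIntersection S) : S.IsCyclotomicNS := by
  induction h with
  | nat S hS => exact isCyclotomicNS_of_carrier_eq_univ hS
  | gluing S S₁ S₂ a₁ a₂ ha₁ ha₂ hcop ha₁S₂ ha₂S₁ hS _ _ ih₁ ih₂ =>
    exact IsGluing.isCyclotomicNS ⟨ha₁, ha₂, hcop, ha₁S₂, ha₂S₁, hS⟩ ih₁ ih₂
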